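/- arXiv:2504.05821 — 3 statements merged into one kernel-verified Lean document; each statement's English description precedes it below -/
import Mathlib

section
/- Let B be a bialgebra with a left n-antipode S, i.e. S * Id^{*(n+1)} = Id^{*n} in the convolution algebra End_k(B). Then for every y ∈ B one has S(y) ⊘ 1 = 1 ⊘ y in B ⊘ B, and consequently the canonical map i_B : B → B ⊘ B, b ↦ b ⊘ 1, is surjective. -/
noncomputable section
open TensorProduct LinearMap

/-- Convolution product of linear maps from a bialgebra to an algebra. -/
def conv {k B A : Type*} [CommRing k] [Ring B] [Bialgebra k B]
    [Ring A] [Algebra k A] (f g : B →ₗ[k] A) : B →ₗ[k] A :=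
  LinearMap.mul' k A ∘ₗ TensorProduct.map f g ∘ₗ Coalgebra.comul

/-- Unit of the convolution algebra: u ∘ ε. -/
def convUnit (k B A : Type*) [CommRing k] [Ring B] [Bialgebra k B]
    [Ring A] [Algebra k A] : B →ₗ[k] A :=
  Algebra.linearMap k A ∘ₗ Coalgebra.counit

/-- n-th convolution power of the identity. -/
def convPow (k B : Type*) [CommRing k] [Ring B] [Bialgebra k B] : ℕ → (B →ₗ[k] B)
  | 0 => convUnit k B B
  | n + 1 => conv (convPow k B n) LinearMap.id

/-- The submodule (B ⊗ B)·Δ(ker ε) of B ⊗ B. -/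
def oslashRel (k B : Type*) [CommRing k] [Ring B] [Bialgebra k B] :
    Submodule k (B ⊗[k] B) :=
  Submodule.span k {z | ∃ (m : B ⊗[k] B) (b : B),
    Coalgebra.counit (R := k) b = 0 ∧ z = m * Coalgebra.comul b}

/-- B ⊘ B. -/
abbrev Oslash (k B : Type*) [CommRing k] [Ring B] [Bialgebra k B] :=
  (B ⊗[k] B) ⧸ oslashRel k B

/-- The class of x ⊗ y in B ⊘ B. -/
abbrev omk (k : Type*) {B : Type*} [CommRing k] [Ring B] [Bialgebra k B]
    (z : B ⊗[k] B) : Oslash k B := Submodule.Quotient.mk z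

/-- i_B : B → B ⊘ B, b ↦ b ⊘ 1. -/
def iB (k B : Type*) [CommRing k] [Ring B] [Bialgebra k B] : B →ₗ[k] Oslash k B :=
  (oslashRel k B).mkQ ∘ₗ (TensorProduct.mk k B B).flip 1

/-- The diagonal right coaction of B on B ⊗ B: Σ x₁ ⊗ y₁ ⊗ x₂y₂. -/
def coact (k B : Type*) [CommRing k] [Ring B] [Bialgebra k B] :
    (B ⊗[k] B) →ₗ[k] (B ⊗[k] B) ⊗[k] B :=
  (TensorProduct.map LinearMap.id (LinearMap.mul' k B)) ∘ₗ
    (TensorProduct.tensorTensorTensorComm k B B B B).toLinearMap ∘ₗ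
    (TensorProduct.map Coalgebra.comul Coalgebra.comul)

/-- z ↦ z ⊗ 1. -/
def unitR (k B : Type*) [CommRing k] [Ring B] [Bialgebra k B] :
    (B ⊗[k] B) →ₗ[k] (B ⊗[k] B) ⊗[k] B :=
  (TensorProduct.map LinearMap.id (Algebra.linearMap k B)) ∘ₗ
    (TensorProduct.rid k (B ⊗[k] B)).symm.toLinearMap

/-- B ⧄ B : the coinvariants of B ⊗ B. -/
def coinv (k B : Type*) [CommRing k] [Ring B] [Bialgebra k B] :
    Submodule k (B ⊗[k] B) :=
  LinearMap.eqLocus (coact k B) (unitR k B)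

/-- Σ x ⊗ y ↦ Σ x ε(y), on all of B ⊗ B. -/
def pB0 (k B : Type*) [CommRing k] [Ring B] [Bialgebra k B] :
    (B ⊗[k] B) →ₗ[k] B :=
  (TensorProduct.rid k B).toLinearMap ∘ₗ TensorProduct.map LinearMap.id Coalgebra.counit

/-- Σ x ⊗ y ↦ Σ ε(x) y, on all of B ⊗ B. -/
def qB0 (k B : Type*) [CommRing k] [Ring B] [Bialgebra k B] :
    (B ⊗[k] B) →ₗ[k] B :=
  (TensorProduct.lid k B).toLinearMap ∘ₗ TensorProduct.map Coalgebra.counit LinearMap.id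

/-- p_B : B ⧄ B → B. -/
def pB (k B : Type*) [CommRing k] [Ring B] [Bialgebra k B] :
    coinv k B →ₗ[k] B :=
  pB0 k B ∘ₗ (coinv k B).subtype


/-!
In `B ⊘ B` one has `(a ⊗ b) · Δc ≡ ε(c) (a ⊗ b)`. Let `R g` be the map `y ↦ Σ g(y₂) y₁`.
By coassociativity `Σ (f * Id)(y₁) ⊗ (R g)(y₂) = Σ (f(y₁) ⊗ g(y₃)) · Δ(y₂)`, whose class is that
of `Σ f(y₁) ⊗ g(y₂)`; iterating, `Σ (f * Id^{*j})(y₁) ⊘ (R^j g)(y₂) = Σ f(y₁) ⊘ g(y₂)`.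
For `(f, g, j) = (S, ε, n + 1)` and `(ε, Id, n)` the left sides agree, because
`S * Id^{*(n+1)} = Id^{*n}` and `R ε = Id`, while the right sides are `S(y) ⊘ 1` and `1 ⊘ y`.
Then `x ⊘ y = (x ⊗ 1) · (1 ⊘ y) = x S(y) ⊘ 1`, so `i_B` is surjective.
-/

open Coalgebra WithConv

section Convolution

variable {k B A : Type*} [CommRing k] [Ring B] [Bialgebra k B] [Ring A] [Algebra k A]

theorem conv_assoc (f g h : B →ₗ[k] A) : conv (conv f g) h = conv f (conv g h) :=
  congrArg ofConv (mul_assoc (toConv f) (toConv g) (toConv h))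

theorem convUnit_conv (f : B →ₗ[k] A) : conv (convUnit k B A) f = f :=
  congrArg ofConv (one_mul (toConv f))

theorem conv_convUnit (f : B →ₗ[k] A) : conv f (convUnit k B A) = f :=
  congrArg ofConv (mul_one (toConv f))

theorem map_convUnit_left_comul (g : B →ₗ[k] A) (y : B) :
    map (convUnit k B A) g (comul y) = 1 ⊗ₜ g y := by
  simp only [convUnit, ← map_comp_rTensor, comp_apply, rTensor_counit_comul,
    TensorProduct.map_tmul, Algebra.linearMap_apply, map_one]

theorem map_convUnit_right_comul (f : B →ₗ[k] A) (y : B) :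
    map f (convUnit k B A) (comul y) = f y ⊗ₜ 1 := by
  simp only [convUnit, ← map_comp_lTensor, comp_apply, lTensor_counit_comul,
    TensorProduct.map_tmul, Algebra.linearMap_apply, map_one]

end Convolution

section Oslash

variable {k B : Type*} [CommRing k] [Ring B] [Bialgebra k B]

/-- `y ↦ Σ g(y₂) y₁`, i.e. the convolution `id * g` computed in `Bᵐᵒᵖ`. -/
def revConv (g : B →ₗ[k] B) : B →ₗ[k] B :=
  mul' k B ∘ₗ (TensorProduct.comm k B B).toLinearMap ∘ₗ map LinearMap.id g ∘ₗ comul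

theorem revConv_convUnit : revConv (convUnit k B B) = LinearMap.id := by
  ext y
  simp [revConv, map_convUnit_right_comul]

theorem mul_mem_oslashRel (w : B ⊗[k] B) {a : B ⊗[k] B} (ha : a ∈ oslashRel k B) :
    w * a ∈ oslashRel k B := by
  induction ha using Submodule.span_induction with
  | mem z hz =>
    obtain ⟨m, b, hb, rfl⟩ := hz
    exact Submodule.subset_span ⟨w * m, b, hb, (mul_assoc w m _).symm⟩
  | zero => simp
  | add x y _ _ hx hy => simpa [mul_add] using add_mem hx hy
  | smul c x _ hx => simpa [mul_smul_comm] using (oslashRel k B).smul_mem c hx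

theorem omk_mul_of_omk_eq (w : B ⊗[k] B) {a b : B ⊗[k] B} (h : omk k a = omk k b) :
    omk k (w * a) = omk k (w * b) := by
  rw [Submodule.Quotient.eq] at h ⊢
  simpa [mul_sub] using mul_mem_oslashRel w h

theorem omk_mul_comul (m : B ⊗[k] B) (c : B) :
    omk k (m * comul c) = counit (R := k) c • omk k m := by
  rw [← Submodule.Quotient.mk_smul, Submodule.Quotient.eq]
  refine Submodule.subset_span ⟨m, c - counit (R := k) c • 1, by simp, ?_⟩
  rw [map_sub, map_smul, Bialgebra.comul_one, mul_sub, mul_smul_comm, mul_one]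

def twistedMul (f g : B →ₗ[k] B) : B ⊗[k] (B ⊗[k] B) →ₗ[k] B ⊗[k] B :=
  map (mul' k B ∘ₗ map f LinearMap.id)
      (mul' k B ∘ₗ (TensorProduct.comm k B B).toLinearMap ∘ₗ map LinearMap.id g) ∘ₗ
    (TensorProduct.assoc k B B (B ⊗[k] B)).symm.toLinearMap ∘ₗ
    (TensorProduct.assoc k B B B).toLinearMap.lTensor B ∘ₗ
    ((comul (R := k) (A := B)).rTensor B).lTensor B

theorem twistedMul_tmul (f g : B →ₗ[k] B) (x c v : B) :
    twistedMul f g (x ⊗ₜ (c ⊗ₜ v)) = (f x ⊗ₜ g v) * comul (R := k) c := by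
  simp only [twistedMul, comp_apply, lTensor_tmul, rTensor_tmul]
  induction comul (R := k) c using TensorProduct.induction_on with
  | zero => simp
  | tmul a b => simp
  | add s t hs ht => simp only [add_tmul, tmul_add, map_add, mul_add, hs, ht]

theorem map_conv_id_revConv_comp_comul (f g : B →ₗ[k] B) :
    map (conv f LinearMap.id) (revConv g) ∘ₗ comul
      = twistedMul f g ∘ₗ (comul (R := k) (A := B)).lTensor B ∘ₗ comul := by
  rw [twistedMul, conv, revConv]
  simp only [coassoc_simps]

theorem mkQ_comp_twistedMul (f g : B →ₗ[k] B) :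
    (oslashRel k B).mkQ ∘ₗ twistedMul f g
      = (oslashRel k B).mkQ ∘ₗ map f g ∘ₗ
          ((TensorProduct.lid k B).toLinearMap ∘ₗ (counit (R := k) (A := B)).rTensor B).lTensor B := by
  ext x c v
  simp [twistedMul_tmul, omk_mul_comul]

theorem mkQ_map_conv_id_revConv_comp_comul (f g : B →ₗ[k] B) :
    (oslashRel k B).mkQ ∘ₗ map (conv f LinearMap.id) (revConv g) ∘ₗ comul
      = (oslashRel k B).mkQ ∘ₗ map f g ∘ₗ comul := by
  rw [map_conv_id_revConv_comp_comul, ← comp_assoc, mkQ_comp_twistedMul]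
  simp [coassoc_simps, CoassocSimps.map_counit_comp_comul_left]

theorem mkQ_map_conv_convPow_revConv_iterate_comp_comul (f g : B →ₗ[k] B) (j : ℕ) :
    (oslashRel k B).mkQ ∘ₗ map (conv f (convPow k B j)) (revConv^[j] g) ∘ₗ comul
      = (oslashRel k B).mkQ ∘ₗ map f g ∘ₗ comul := by
  induction j with
  | zero => rw [convPow, conv_convUnit, Function.iterate_zero_apply]
  | succ j ih =>
    rw [convPow, ← conv_assoc, Function.iterate_succ_apply',
      mkQ_map_conv_id_revConv_comp_comul, ih]

theorem omk_tmul_one_eq_one_tmul_of_conv_convPow (n : ℕ) (S : B →ₗ[k] B)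
    (hS : conv S (convPow k B (n + 1)) = convPow k B n) (y : B) :
    omk k (S y ⊗ₜ[k] (1 : B)) = omk k ((1 : B) ⊗ₜ[k] y) := by
  have hS' := LinearMap.congr_fun
    (mkQ_map_conv_convPow_revConv_iterate_comp_comul S (convUnit k B B) (n + 1)) y
  have hUnit := LinearMap.congr_fun
    (mkQ_map_conv_convPow_revConv_iterate_comp_comul (convUnit k B B) LinearMap.id n) y
  rw [hS, Function.iterate_succ_apply, revConv_convUnit] at hS'
  rw [convUnit_conv] at hUnit
  simp only [comp_apply, Submodule.mkQ_apply, map_convUnit_left_comul,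
    map_convUnit_right_comul] at hS' hUnit
  exact hS'.symm.trans hUnit

theorem iB_surjective_of_omk_tmul_one_eq (S : B →ₗ[k] B)
    (hS : ∀ y : B, omk k (S y ⊗ₜ[k] (1 : B)) = omk k ((1 : B) ⊗ₜ[k] y)) :
    Function.Surjective (iB k B) := by
  intro q
  obtain ⟨t, rfl⟩ := Submodule.Quotient.mk_surjective (oslashRel k B) q
  induction t using TensorProduct.induction_on with
  | zero => exact ⟨0, by simp⟩
  | tmul x y =>
    refine ⟨x * S y, ?_⟩
    simpa [iB] using omk_mul_of_omk_eq (x ⊗ₜ[k] (1 : B)) (hS y)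
  | add a b ha hb =>
    obtain ⟨u, hu⟩ := ha
    obtain ⟨v, hv⟩ := hb
    exact ⟨u + v, by rw [map_add, hu, hv, Submodule.Quotient.mk_add]⟩

end Oslash

theorem stmt7 (k B : Type*) [Field k] [Ring B] [Bialgebra k B]
    (n : ℕ) (S : B →ₗ[k] B)
    (hS : conv S (convPow k B (n + 1)) = convPow k B n) :
    (∀ y : B, omk k (S y ⊗ₜ[k] (1 : B)) = omk k ((1 : B) ⊗ₜ[k] y)) ∧
    Function.Surjective (iB k B) :=
  have hrel := omk_tmul_one_eq_one_tmul_of_conv_convPow n S hS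
  ⟨hrel, iB_surjective_of_omk_tmul_one_eq S hrel⟩
end
end

section
/- Let B be a bialgebra that is generated as an algebra by a subset {xᵢ : i ∈ I}, and suppose that for every i there exists xᵢ' ∈ B with 1 ⊘ xᵢ = xᵢ' ⊘ 1 in B ⊘ B. Then the canonical map i_B : B → B ⊘ B, b ↦ b ⊘ 1, is surjective. -/
/-! A relation `1 ⊘ y = y' ⊘ 1` can be multiplied on the left by `a ⊗ b`, since the relations
`(B ⊗ B)·Δ(ker ε)` form a left ideal; this gives `a ⊘ by = ay' ⊘ b`. Hence the elements `y` for
which `1 ⊘ y` lies in the image of `i_B` form a subalgebra (with `(yz)' = z'y'`), which contains the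
generators and is therefore all of `B`; and then `a ⊘ b = ab' ⊘ 1` for all `a`, `b`. -/

noncomputable section
open TensorProduct LinearMap

section

variable (k B : Type*) [CommRing k] [Ring B] [Bialgebra k B]

theorem oslashRel_mul_mem (w : B ⊗[k] B) {z : B ⊗[k] B} (hz : z ∈ oslashRel k B) :
    w * z ∈ oslashRel k B := by
  induction hz using Submodule.span_induction with
  | mem z hz =>
    obtain ⟨m, c, hc, rfl⟩ := hz
    exact Submodule.subset_span ⟨w * m, c, hc, (mul_assoc _ _ _).symm⟩
  | zero => simp
  | add z₁ z₂ _ _ h₁ h₂ => rw [mul_add]; exact Submodule.add_mem _ h₁ h₂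
  | smul r z _ h => rw [mul_smul_comm]; exact Submodule.smul_mem _ _ h

variable {k B}

theorem omk_mul_eq_omk_mul {z w : B ⊗[k] B} (m : B ⊗[k] B) (h : omk k z = omk k w) :
    omk k (m * z) = omk k (m * w) := by
  rw [Submodule.Quotient.eq] at h ⊢
  rw [← mul_sub]
  exact oslashRel_mul_mem k B m h

theorem omk_tmul_mul_eq {y y' : B} (h : omk k ((1 : B) ⊗ₜ[k] y) = omk k (y' ⊗ₜ[k] (1 : B)))
    (a b : B) : omk k (a ⊗ₜ[k] (b * y)) = omk k ((a * y') ⊗ₜ[k] b) := by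
  simpa only [Algebra.TensorProduct.tmul_mul_tmul, mul_one] using
    omk_mul_eq_omk_mul (a ⊗ₜ[k] b) h

variable (k B)

def oneTmulPreimageRangeIB : Submodule k B :=
  (range (iB k B)).comap ((oslashRel k B).mkQ ∘ₗ TensorProduct.mk k B B 1)

variable {k B}

theorem mem_oneTmulPreimageRangeIB {y : B} :
    y ∈ oneTmulPreimageRangeIB k B ↔ ∃ y' : B, omk k (y' ⊗ₜ[k] (1 : B)) = omk k (1 ⊗ₜ[k] y) :=
  Iff.rfl

theorem mul_mem_oneTmulPreimageRangeIB {y z : B} (hy : y ∈ oneTmulPreimageRangeIB k B)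
    (hz : z ∈ oneTmulPreimageRangeIB k B) : y * z ∈ oneTmulPreimageRangeIB k B := by
  obtain ⟨y', hy'⟩ := mem_oneTmulPreimageRangeIB.mp hy
  obtain ⟨z', hz'⟩ := mem_oneTmulPreimageRangeIB.mp hz
  refine mem_oneTmulPreimageRangeIB.mpr ⟨z' * y', ?_⟩
  calc omk k ((z' * y') ⊗ₜ[k] (1 : B)) = omk k (z' ⊗ₜ[k] (1 * y)) :=
        (omk_tmul_mul_eq hy'.symm z' 1).symm
    _ = omk k ((1 : B) ⊗ₜ[k] (y * z)) := by
        rw [omk_tmul_mul_eq hz'.symm 1 y, one_mul, one_mul]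

variable (k B)

def oneTmulPreimageRangeIBSubalgebra : Subalgebra k B :=
  (oneTmulPreimageRangeIB k B).toSubalgebra
    (mem_oneTmulPreimageRangeIB.mpr ⟨1, rfl⟩)
    (fun _ _ => mul_mem_oneTmulPreimageRangeIB)

variable {k B}

theorem iB_surjective_of_forall_mem (hall : ∀ y, y ∈ oneTmulPreimageRangeIB k B) :
    Function.Surjective (iB k B) := by
  rw [← range_eq_top, eq_top_iff]
  rintro q -
  obtain ⟨z, rfl⟩ := Submodule.Quotient.mk_surjective _ q
  induction z using TensorProduct.induction_on with
  | zero => exact zero_mem _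
  | tmul a b =>
    obtain ⟨b', hb'⟩ := mem_oneTmulPreimageRangeIB.mp (hall b)
    have hab := omk_tmul_mul_eq hb'.symm a 1
    rw [one_mul] at hab
    exact ⟨a * b', hab.symm⟩
  | add z₁ z₂ h₁ h₂ => exact add_mem h₁ h₂

end

theorem stmt11 (k B : Type*) [Field k] [Ring B] [Bialgebra k B]
    (X : Set B) (hgen : Algebra.adjoin k X = ⊤)
    (h : ∀ x ∈ X, ∃ x' : B,
      omk k ((1 : B) ⊗ₜ[k] x) = omk k (x' ⊗ₜ[k] (1 : B))) :
    Function.Surjective (iB k B) := by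
  have hX : X ⊆ oneTmulPreimageRangeIBSubalgebra k B := fun x hx =>
    let ⟨x', hx'⟩ := h x hx
    mem_oneTmulPreimageRangeIB.mpr ⟨x', hx'.symm⟩
  have hle : (⊤ : Subalgebra k B) ≤ oneTmulPreimageRangeIBSubalgebra k B :=
    hgen ▸ Algebra.adjoin_le hX
  exact iB_surjective_of_forall_mem fun y => hle Algebra.mem_top
end
end

section
/- Let B be a bialgebra such that the map i_{B^cop} : B^cop → B^cop ⊘ B^cop is surjective (equivalently, there is a linear endomorphism S̄ of B with b ⊘ 1 = 1 ⊘ S̄(b) in B ⊘ B for all b). Then ker(i_B) is a two-sided ideal and a two-sided coideal of B, so the quotient B/ker(i_B) is a bialgebra isomorphic to the image of i_B. -/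
noncomputable section
open TensorProduct LinearMap

/-!
Write `π : B ⊗ B → B ⊘ B` for the quotient map, so that `i_B x = π (x ⊗ 1)`. The relations
`(B ⊗ B)·Δ(ker ε)` form a left ideal of `B ⊗ B`, which makes `ker i_B` a left ideal; it is a
right ideal because `x b ⊗ 1 = (x ⊗ 1)(b ⊗ 1 - 1 ⊗ S̄ b) + (1 ⊗ S̄ b)(x ⊗ 1)`.
The algebra map `ε ⊗ ε` kills the relations, and `ε x = (ε ⊗ ε)(x ⊗ 1)`.

For the coideal property let `E` be the comultiplication of `B ⊗ Bᶜᵒᵖ`, an algebra map.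
Coassociativity gives `E(Δc) = (c₁ ⊗ c₃) ⊗ Δc₂`, and `π (Δc₂) = ε(c₂) π 1`, so
`(π ⊗ π)(E(Δc)) = ε(c) π 1 ⊗ π 1`. Hence `(π ⊗ π) ∘ E` kills the relations; at `x ⊗ 1` it
equals `(i_B ⊗ i_B)(Δx)`. Over a field the kernel of `i_B ⊗ i_B` is `ker i_B ⊗ B + B ⊗ ker i_B`.
-/

open Coalgebra

theorem TensorProduct.ker_map_of_flat {R M N P Q : Type*} [CommRing R]
    [AddCommGroup M] [Module R M] [AddCommGroup N] [Module R N]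
    [AddCommGroup P] [Module R P] [AddCommGroup Q] [Module R Q]
    (f : M →ₗ[R] P) (g : N →ₗ[R] Q) [Module.Flat R P] [Module.Flat R (range g)] :
    ker (map f g) =
      range (map (ker f).subtype (LinearMap.id : N →ₗ[R] N)) ⊔
        range (map (LinearMap.id : M →ₗ[R] M) (ker g).subtype) := by
  have hfactor : map f g = map (range f).subtype (range g).subtype ∘ₗ
      map f.rangeRestrict g.rangeRestrict := by
    rw [← map_comp]; rfl
  rw [hfactor, ker_comp_of_ker_eq_bot _ (ker_eq_bot_of_injective
      (map_injective_of_flat_flat _ _ (range f).injective_subtype (range g).injective_subtype)),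
    map_ker (f.rangeRestrict.exact_subtype_ker_map) f.surjective_rangeRestrict
      (g.rangeRestrict.exact_subtype_ker_map) g.surjective_rangeRestrict,
    ker_rangeRestrict, ker_rangeRestrict, sup_comm]
  rfl

section Oslash

variable {k B : Type*} [CommRing k] [Ring B] [Bialgebra k B]

local notation "π" => Submodule.mkQ (oslashRel k B)

lemma mul_comul_mem_oslashRel (m : B ⊗[k] B) {c : B} (hc : counit (R := k) c = 0) :
    m * comul c ∈ oslashRel k B :=
  Submodule.subset_span ⟨m, c, hc, rfl⟩

lemma oslashRel_le_comap_mulLeft (w : B ⊗[k] B) :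
    oslashRel k B ≤ (oslashRel k B).comap (LinearMap.mulLeft k w) := by
  refine Submodule.span_le.mpr ?_
  rintro _ ⟨m, c, hc, rfl⟩
  simpa [mul_assoc] using mul_comul_mem_oslashRel (w * m) hc

variable (k) in
def oslashMulLeft (w : B ⊗[k] B) : Oslash k B →ₗ[k] Oslash k B :=
  (oslashRel k B).mapQ (oslashRel k B) (LinearMap.mulLeft k w) (oslashRel_le_comap_mulLeft w)

lemma map_mkQ_tmul_mul (u v : B ⊗[k] B) (z : (B ⊗[k] B) ⊗[k] (B ⊗[k] B)) :
    map π π ((u ⊗ₜ[k] v) * z) =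
      map (oslashMulLeft k u) (oslashMulLeft k v) (map π π z) := by
  induction z using TensorProduct.induction_on with
  | zero => simp
  | tmul x y => simp [oslashMulLeft]
  | add x y hx hy => simp only [mul_add, map_add, hx, hy]

lemma map_mkQ_mul_eq_zero (w : (B ⊗[k] B) ⊗[k] (B ⊗[k] B))
    {z : (B ⊗[k] B) ⊗[k] (B ⊗[k] B)} (hz : map π π z = 0) : map π π (w * z) = 0 := by
  induction w using TensorProduct.induction_on with
  | zero => simp
  | tmul u v => rw [map_mkQ_tmul_mul, hz, map_zero]
  | add x y hx hy => simp only [add_mul, map_add, hx, hy, add_zero]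

lemma iB_eq_zero_iff {x : B} : iB k B x = 0 ↔ x ⊗ₜ[k] (1 : B) ∈ oslashRel k B :=
  Submodule.Quotient.mk_eq_zero _

lemma omk_comul (b : B) : omk k (comul b) = counit (R := k) b • omk k 1 := by
  have hb : counit (R := k) (b - counit (R := k) b • 1) = 0 := by simp
  have : π (comul (b - counit (R := k) b • 1)) = 0 := by
    simpa using (Submodule.Quotient.mk_eq_zero _).mpr (mul_comul_mem_oslashRel 1 hb)
  rwa [map_sub, map_smul, Bialgebra.comul_one, map_sub, sub_eq_zero, map_smul] at this

lemma counit_comul (b : B) : counit (R := k) (comul (R := k) b) = counit (R := k) b := by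
  have h := congrArg (fun z ↦ TensorProduct.lid k k (LinearMap.lTensor k counit z))
    (rTensor_counit_comul (R := k) b)
  simp only [lTensor_tmul, TensorProduct.lid_tmul, smul_eq_mul, one_mul] at h
  rw [← h]
  induction comul (R := k) b using TensorProduct.induction_on with
  | zero => simp
  | tmul x y => simp [mul_comm]
  | add x y hx hy => simp only [map_add, hx, hy]

lemma oslashRel_le_ker_counit : oslashRel k B ≤ ker (counit : B ⊗[k] B →ₗ[k] k) := by
  refine Submodule.span_le.mpr ?_
  rintro _ ⟨m, c, hc, rfl⟩
  simp [Bialgebra.counit_mul, counit_comul, hc]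

-- The comultiplication `u ⊗ v ↦ (u₁ ⊗ v₂) ⊗ (u₂ ⊗ v₁)` of `B ⊗ Bᶜᵒᵖ`.
variable (k B) in
def twistedComul : B ⊗[k] B →ₐ[k] (B ⊗[k] B) ⊗[k] (B ⊗[k] B) :=
  ((Algebra.TensorProduct.tensorTensorTensorComm k k k k B B B B).toAlgHom.comp
    (Algebra.TensorProduct.map (AlgHom.id k _) (Algebra.TensorProduct.comm k B B).toAlgHom)).comp
    (Algebra.TensorProduct.map (Bialgebra.comulAlgHom k B) (Bialgebra.comulAlgHom k B))

lemma twistedComul_apply (z : B ⊗[k] B) : twistedComul k B z =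
    tensorTensorTensorComm k B B B B (lTensor _ (TensorProduct.comm k B B).toLinearMap
      (map comul comul z)) :=
  rfl

lemma twistedComul_tmul_one (x : B) : twistedComul k B (x ⊗ₜ 1) =
    map ((TensorProduct.mk k B B).flip 1) ((TensorProduct.mk k B B).flip 1) (comul x) := by
  rw [twistedComul_apply, map_tmul, Bialgebra.comul_one]
  induction comul (R := k) x using TensorProduct.induction_on with
  | zero => simp
  | tmul u v => simp [Algebra.TensorProduct.one_def]
  | add x y hx hy => simp only [add_tmul, map_add, hx, hy]

lemma twistedComul_comul (b : B) : twistedComul k B (comul b) =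
    rightComm k B (B ⊗[k] B) B (rTensor B (lTensor B comul) (rTensor B comul (comul b))) := by
  have hperm : ∀ z : (B ⊗[k] B) ⊗[k] B,
      tensorTensorTensorComm k B B B B (lTensor _ (TensorProduct.comm k B B).toLinearMap
        (rTensor _ comul (TensorProduct.assoc k B B B z))) =
      rightComm k B (B ⊗[k] B) B
        (rTensor B (TensorProduct.assoc k B B B).toLinearMap (rTensor B (rTensor B comul) z)) := by
    intro z
    induction z using TensorProduct.induction_on with
    | zero => simp
    | add x y hx hy => simp only [map_add, hx, hy]
    | tmul ab c =>
      induction ab using TensorProduct.induction_on with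
      | zero => simp
      | add x y hx hy => simp only [add_tmul, map_add, hx, hy]
      | tmul a b =>
        simp only [TensorProduct.assoc_tmul, rTensor_tmul]
        induction comul (R := k) a using TensorProduct.induction_on with
        | zero => simp
        | add x y hx hy => simp only [add_tmul, map_add, hx, hy]
        | tmul a₁ a₂ => simp
  rw [twistedComul_apply, ← rTensor_comp_lTensor, LinearMap.comp_apply, ← coassoc_apply, hperm,
    ← rTensor_comp_apply, ← rTensor_comp_apply, LinearMap.comp_assoc, coassoc,
    rTensor_comp_apply]

lemma map_mkQ_twistedComul_comul (b : B) :
    map π π (twistedComul k B (comul b)) = counit (R := k) b • (π 1 ⊗ₜ[k] π 1) := by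
  have hmiddle : ∀ z : (B ⊗[k] B) ⊗[k] B,
      map π π (rightComm k B (B ⊗[k] B) B (rTensor B (lTensor B comul) z)) =
        π (rTensor B ((TensorProduct.rid k B).toLinearMap ∘ₗ lTensor B counit) z) ⊗ₜ[k]
          π 1 := by
    intro z
    induction z using TensorProduct.induction_on with
    | zero => simp
    | add x y hx hy => simp only [map_add, add_tmul, hx, hy]
    | tmul ab c =>
      induction ab using TensorProduct.induction_on with
      | zero => simp
      | add x y hx hy => simp only [add_tmul, map_add, hx, hy]
      | tmul a b => simp [omk_comul, TensorProduct.smul_tmul]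
  have hcounit :
      (TensorProduct.rid k B).toLinearMap ∘ₗ lTensor B counit ∘ₗ comul = LinearMap.id := by
    ext a; simp [lTensor_counit_comul]
  rw [twistedComul_comul, hmiddle, ← rTensor_comp_apply, LinearMap.comp_assoc, hcounit,
    rTensor_id, LinearMap.id_apply]
  simp [omk_comul, smul_tmul']

lemma oslashRel_le_ker_map_mkQ_twistedComul :
    oslashRel k B ≤ ker (map π π ∘ₗ (twistedComul k B).toLinearMap) := by
  refine Submodule.span_le.mpr ?_
  rintro _ ⟨m, c, hc, rfl⟩
  simp only [SetLike.mem_coe, mem_ker, LinearMap.comp_apply, AlgHom.toLinearMap_apply, map_mul]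
  exact map_mkQ_mul_eq_zero _ (by rw [map_mkQ_twistedComul_comul, hc, zero_smul])

lemma map_iB_iB_comul_eq_zero {x : B} (hx : iB k B x = 0) :
    map (iB k B) (iB k B) (comul x) = 0 := by
  have h := oslashRel_le_ker_map_mkQ_twistedComul (iB_eq_zero_iff.mp hx)
  rwa [mem_ker, LinearMap.comp_apply, AlgHom.toLinearMap_apply, twistedComul_tmul_one,
    ← LinearMap.comp_apply, ← map_comp] at h

lemma iB_mul_left_eq_zero {x : B} (hx : iB k B x = 0) (b : B) : iB k B (b * x) = 0 := by
  rw [iB_eq_zero_iff] at hx ⊢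
  simpa using oslashRel_le_comap_mulLeft (b ⊗ₜ[k] (1 : B)) hx

lemma iB_mul_right_eq_zero (Sb : B →ₗ[k] B)
    (hSb : ∀ b : B, omk k (b ⊗ₜ[k] (1 : B)) = omk k ((1 : B) ⊗ₜ[k] Sb b))
    {x : B} (hx : iB k B x = 0) (b : B) : iB k B (x * b) = 0 := by
  rw [iB_eq_zero_iff] at hx ⊢
  have hb : b ⊗ₜ[k] (1 : B) - (1 : B) ⊗ₜ[k] Sb b ∈ oslashRel k B :=
    (Submodule.Quotient.eq _).mp (hSb b)
  have hsplit : (x * b) ⊗ₜ[k] (1 : B) =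
      (x ⊗ₜ[k] (1 : B)) * (b ⊗ₜ[k] (1 : B) - (1 : B) ⊗ₜ[k] Sb b) +
        ((1 : B) ⊗ₜ[k] Sb b) * (x ⊗ₜ[k] (1 : B)) := by
    simp only [mul_sub, Algebra.TensorProduct.tmul_mul_tmul, one_mul, mul_one, sub_add_cancel]
  rw [hsplit]
  exact add_mem (oslashRel_le_comap_mulLeft _ hb) (oslashRel_le_comap_mulLeft _ hx)

lemma counit_eq_zero_of_iB_eq_zero {x : B} (hx : iB k B x = 0) : counit (R := k) x = 0 := by
  simpa using oslashRel_le_ker_counit (iB_eq_zero_iff.mp hx)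

end Oslash

lemma comul_mem_of_iB_eq_zero {k B : Type*} [Field k] [Ring B] [Bialgebra k B] {x : B}
    (hx : iB k B x = 0) :
    comul (R := k) x ∈
      range (map (ker (iB k B)).subtype (LinearMap.id : B →ₗ[k] B)) ⊔
        range (map (LinearMap.id : B →ₗ[k] B) (ker (iB k B)).subtype) := by
  rw [← TensorProduct.ker_map_of_flat]
  exact map_iB_iB_comul_eq_zero hx

theorem stmt17 (k B : Type*) [Field k] [Ring B] [Bialgebra k B]
    (Sb : B →ₗ[k] B)
    (hSb : ∀ b : B, omk k (b ⊗ₜ[k] (1 : B)) = omk k ((1 : B) ⊗ₜ[k] Sb b)) :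
    (∀ x : B, iB k B x = 0 → ∀ b : B, iB k B (b * x) = 0 ∧ iB k B (x * b) = 0) ∧
    (∀ x : B, iB k B x = 0 → Coalgebra.counit (R := k) x = 0) ∧
    (∀ x : B, iB k B x = 0 → Coalgebra.comul (R := k) x ∈
      LinearMap.range (TensorProduct.map (LinearMap.ker (iB k B)).subtype
        (LinearMap.id : B →ₗ[k] B)) ⊔
      LinearMap.range (TensorProduct.map (LinearMap.id : B →ₗ[k] B)
        (LinearMap.ker (iB k B)).subtype)) ∧
    Nonempty ((B ⧸ LinearMap.ker (iB k B)) ≃ₗ[k] LinearMap.range (iB k B)) :=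
  ⟨fun _ hx b ↦ ⟨iB_mul_left_eq_zero hx b, iB_mul_right_eq_zero Sb hSb hx b⟩,
    fun _ ↦ counit_eq_zero_of_iB_eq_zero, fun _ ↦ comul_mem_of_iB_eq_zero,
    ⟨(iB k B).quotKerEquivRange⟩⟩
end
end
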